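/- One-step bound for the perturbed Douglas–Rachford update. Let S : ℝ^n → ℝ^n be firmly nonexpansive with S(v*) = 0 for some v* ∈ ℝ^n, let γ, L > 0 and R ≥ 0, and let S_i : ℝ^n → ℝ^n be any map. Fix v ∈ ℝ^n and suppose ‖S_i(v) − S(v)‖ ≤ 2γL and ‖v − v*‖ ≤ R + 2γL. Then the updated point v⁺ := v − S_i(v) satisfies ‖v⁺ − v*‖² ≤ ‖v − v*‖² − ‖S(v)‖² + 4γLR + 12γ²L². -/
import Mathlib


open scoped RealInnerProductSpace

/-- Euclidean space ℝ^n. -/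
abbrev En (n : ℕ) := EuclideanSpace ℝ (Fin n)

/-- A map `S : ℝ^n → ℝ^n` is firmly nonexpansive if
`⟨S x − S y, x − y⟩ ≥ ‖S x − S y‖²` for all `x, y`. -/
def FirmlyNonexpansive {n : ℕ} (S : En n → En n) : Prop :=
  ∀ x y : En n, ‖S x - S y‖ ^ 2 ≤ ⟪S x - S y, x - y⟫

/-- One-step bound for the perturbed Douglas–Rachford update. -/
theorem perturbed_dr_one_step_bound {n : ℕ}
    (S : En n → En n) (hS : FirmlyNonexpansive S)
    (vstar : En n) (hvstar : S vstar = 0)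
    (γ L : ℝ) (hγ : 0 < γ) (hL : 0 < L) (R : ℝ) (hR : 0 ≤ R)
    (Si : En n → En n) (v : En n)
    (herr : ‖Si v - S v‖ ≤ 2 * γ * L)
    (hdist : ‖v - vstar‖ ≤ R + 2 * γ * L) :
    ‖(v - Si v) - vstar‖ ^ 2
      ≤ ‖v - vstar‖ ^ 2 - ‖S v‖ ^ 2 + 4 * γ * L * R + 12 * γ ^ 2 * L ^ 2 := by
  set a : En n := (v - S v) - vstar with ha
  set e : En n := Si v - S v with he
  have hfirm := hS v vstar
  rw [hvstar, sub_zero] at hfirm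
  have ha2 : ‖a‖ ^ 2 ≤ ‖v - vstar‖ ^ 2 - ‖S v‖ ^ 2 := by
    have : a = (v - vstar) - S v := by rw [ha]; abel
    rw [this, norm_sub_sq_real, real_inner_comm]
    nlinarith [hfirm]
  have hanorm : ‖a‖ ≤ R + 2 * γ * L := by
    have h1 : ‖a‖ ^ 2 ≤ ‖v - vstar‖ ^ 2 := by nlinarith [sq_nonneg ‖S v‖]
    nlinarith [norm_nonneg a, norm_nonneg (v - vstar)]
  have hkey : (v - Si v) - vstar = a - e := by rw [ha, he]; abel
  rw [hkey, norm_sub_sq_real]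
  have hip : |⟪a, e⟫| ≤ ‖a‖ * ‖e‖ := abs_real_inner_le_norm a e
  have henorm : ‖e‖ ≤ 2 * γ * L := herr
  have he0 : (0:ℝ) ≤ ‖e‖ := norm_nonneg e
  have ha0 : (0:ℝ) ≤ ‖a‖ := norm_nonneg a
  nlinarith [abs_nonneg ⟪a, e⟫, neg_abs_le ⟪a, e⟫, mul_le_mul hanorm henorm he0 (by positivity : (0:ℝ) ≤ R + 2*γ*L)]
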